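/- arXiv:math/0502041 — 3 statements merged into one kernel-verified Lean document; each statement's English description precedes it below -/
import Mathlib

section
/- (Lindström–Gessel–Viennot cancellation) Let $G$ be a locally finite directed acyclic graph, let $u_1, \dots, u_l$ and $v_1, \dots, v_l$ be vertices, and suppose the vertices are arranged so that any two paths $u_i \to v_{\pi(i)}$ and $u_j \to v_{\pi(j)}$ with $i < j$ and $\pi(i) > \pi(j)$ must intersect. Then the signed sum $\sum_{\pi \in S_l} \mathrm{sgn}(\pi) \sum_{\mathbf{p}} w(\mathbf{p})$ over all $l$-tuples of paths $u_i \to v_{\pi(i)}$, weighted multiplicatively by edge weights $w$ in a commutative ring, equals the sum of $w(\mathbf{p})$ over all pairwise vertex-disjoint tuples of paths with $\pi = \mathrm{id}$, provided all relevant sums are finite. -/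
/-- A (directed) path in a digraph with adjacency relation `adj`, from `u`
to `v`, recorded as its list of visited vertices. -/
structure DiPath (V : Type*) (adj : V → V → Prop) (u v : V) where
  verts : List V
  verts_ne : verts ≠ []
  head_eq : verts.head? = some u
  last_eq : verts.getLast? = some v
  chain : verts.Chain' adj

/-- The weight of a path: the product of the weights of its edges. -/
def DiPath.weight {V : Type*} {R : Type*} [CommRing R] {adj : V → V → Prop}
    {u v : V} (w : V → V → R) (p : DiPath V adj u v) : R :=
  ((p.verts.zip p.verts.tail).map fun q => w q.1 q.2).prod

/-- Two paths intersect if they share a vertex. -/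
def DiPath.Intersects {V : Type*} {adj : V → V → Prop} {u v u' v' : V}
    (p : DiPath V adj u v) (q : DiPath V adj u' v') : Prop :=
  ∃ x, x ∈ p.verts ∧ x ∈ q.verts

/-!
Pair each tuple of paths with its permutation `π` and give the pair the weight `sgn π · w(p)`.
On pairs with an intersection, let `i` be the least index whose path meets a later path, `x` the
first vertex of path `i` on a later path, and `j` the least later index whose path passes through
`x`; exchanging the tails of paths `i` and `j` after `x` is then a weight-preserving,
sign-reversing involution. The point is that `(i, x, j)` is unchanged by the exchange, which
uses that paths in an acyclic graph are simple. Only non-intersecting pairs survive, and by the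
crossing hypothesis these all have `π = 1`.
-/

namespace List

variable {α : Type*}

section edgeProd

variable {M : Type*} [CommMonoid M] (f : α → α → M)

def edgeProd (L : List α) : M :=
  ((L.zip L.tail).map fun q => f q.1 q.2).prod

@[simp] theorem edgeProd_singleton (a : α) : edgeProd f [a] = 1 := rfl

@[simp] theorem edgeProd_cons_cons (a b : α) (L : List α) :
    edgeProd f (a :: b :: L) = f a b * edgeProd f (b :: L) := rfl

theorem edgeProd_cons_append_cons (a : α) (A : List α) (x : α) (B : List α) :
    edgeProd f (a :: A ++ x :: B) = edgeProd f (a :: A ++ [x]) * edgeProd f (x :: B) := by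
  induction A generalizing a with
  | nil => simp
  | cons b A ih =>
    simp only [cons_append] at ih ⊢
    rw [edgeProd_cons_cons, edgeProd_cons_cons, ih, mul_assoc]

theorem edgeProd_append_cons (A : List α) (x : α) (B : List α) :
    edgeProd f (A ++ x :: B) = edgeProd f (A ++ [x]) * edgeProd f (x :: B) := by
  cases A with
  | nil => simp
  | cons a A => exact edgeProd_cons_append_cons f a A x B

theorem edgeProd_mul_edgeProd_exchange (A B C D : List α) (x : α) :
    edgeProd f (A ++ x :: D) * edgeProd f (C ++ x :: B) =
      edgeProd f (A ++ x :: B) * edgeProd f (C ++ x :: D) := by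
  rw [edgeProd_append_cons f A x D, edgeProd_append_cons f C x B,
    edgeProd_append_cons f A x B, edgeProd_append_cons f C x D]
  ac_rfl

end edgeProd

theorem IsChain.exchange {R : α → α → Prop} {A B C D : List α} {x : α}
    (h₁ : IsChain R (A ++ x :: B)) (h₂ : IsChain R (C ++ x :: D)) :
    IsChain R (A ++ x :: D) := by
  rw [isChain_append] at *
  exact ⟨h₁.1, h₂.2.1, by simpa using h₁.2.2⟩

variable [DecidableEq α] {x y : α} {L M : List α}

theorem ne_of_mem_takeWhile_ne (h : y ∈ L.takeWhile (· ≠ x)) : y ≠ x := by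
  simpa using mem_takeWhile_imp h

theorem dropWhile_ne_of_mem (h : x ∈ L) :
    L.dropWhile (· ≠ x) = x :: (L.dropWhile (· ≠ x)).tail := by
  induction L with
  | nil => cases h
  | cons a L ih =>
    by_cases ha : a = x
    · simp [ha]
    · rw [dropWhile_cons_of_pos (by simpa using ha)]
      exact ih (by simpa [Ne.symm ha] using h)

theorem takeWhile_ne_append_cons_of_mem (h : x ∈ L) :
    L.takeWhile (· ≠ x) ++ x :: (L.dropWhile (· ≠ x)).tail = L := by
  rw [← dropWhile_ne_of_mem h, takeWhile_append_dropWhile]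

theorem mem_takeWhile_ne_or_eq_or_mem (hx : x ∈ L) (hy : y ∈ L) :
    x ∈ L.takeWhile (· ≠ y) ∨ x = y ∨ y ∈ L.takeWhile (· ≠ x) := by
  induction L with
  | nil => cases hx
  | cons a L ih =>
    by_cases hax : a = x
    · subst hax
      by_cases hay : a = y
      · exact Or.inr (Or.inl hay)
      · left; simp [hay]
    · by_cases hay : a = y
      · subst hay; right; right; simp [hax]
      · have := ih (by simpa [Ne.symm hax] using hx) (by simpa [Ne.symm hay] using hy)
        simp only [takeWhile_cons, ne_eq, hax, hay]
        tauto

theorem exists_mem_forall_mem_takeWhile_ne {p : α → Prop} (h : ∃ y ∈ L, p y) :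
    ∃ x ∈ L, p x ∧ ∀ y ∈ L.takeWhile (· ≠ x), ¬ p y := by
  induction L with
  | nil => simp at h
  | cons a L ih =>
    by_cases ha : p a
    · exact ⟨a, mem_cons_self, ha, by simp⟩
    · obtain ⟨x, hxL, hx, hfirst⟩ := ih (by simpa [ha] using h)
      have hax : a ≠ x := fun hax => ha (hax ▸ hx)
      refine ⟨x, mem_cons_of_mem a hxL, hx, fun y hy => ?_⟩
      simp only [takeWhile_cons, ne_eq, hax, not_false_eq_true, decide_true] at hy
      rcases mem_cons.1 hy with rfl | hy
      exacts [ha, hfirst y hy]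

def spliceAt (x : α) (L M : List α) : List α :=
  L.takeWhile (· ≠ x) ++ M.dropWhile (· ≠ x)

@[simp] theorem spliceAt_self (x : α) (L : List α) : spliceAt x L L = L :=
  takeWhile_append_dropWhile

theorem spliceAt_eq_append_cons (hM : x ∈ M) :
    spliceAt x L M = L.takeWhile (· ≠ x) ++ x :: (M.dropWhile (· ≠ x)).tail := by
  rw [spliceAt, ← dropWhile_ne_of_mem hM]

theorem mem_spliceAt (hM : x ∈ M) : x ∈ spliceAt x L M := by
  simp [spliceAt_eq_append_cons hM]

theorem mem_or_mem_of_mem_spliceAt (h : y ∈ spliceAt x L M) : y ∈ L ∨ y ∈ M := by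
  rcases mem_append.1 h with h | h
  · exact Or.inl ((takeWhile_prefix _).subset h)
  · exact Or.inr ((dropWhile_suffix _).subset h)

theorem takeWhile_ne_spliceAt (hM : x ∈ M) :
    (spliceAt x L M).takeWhile (· ≠ x) = L.takeWhile (· ≠ x) := by
  rw [spliceAt_eq_append_cons hM, takeWhile_append_of_pos (fun a ha => by
    simpa using ne_of_mem_takeWhile_ne ha)]
  simp

theorem dropWhile_ne_spliceAt :
    (spliceAt x L M).dropWhile (· ≠ x) = M.dropWhile (· ≠ x) := by
  rw [spliceAt, dropWhile_append_of_pos, dropWhile_idempotent]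
  intro a ha
  simpa using ne_of_mem_takeWhile_ne ha

theorem spliceAt_spliceAt (L' M' : List α) (hM : x ∈ M) :
    spliceAt x (spliceAt x L M) (spliceAt x M' L') = spliceAt x L L' := by
  rw [spliceAt, takeWhile_ne_spliceAt hM, dropWhile_ne_spliceAt, spliceAt]

theorem head?_spliceAt (hL : x ∈ L) (hM : x ∈ M) : (spliceAt x L M).head? = L.head? := by
  cases L with
  | nil => cases hL
  | cons a L =>
    by_cases ha : a = x
    · simp [spliceAt_eq_append_cons hM, ha]
    · simp [spliceAt, ha]

theorem getLast?_spliceAt (hM : x ∈ M) : (spliceAt x L M).getLast? = M.getLast? := by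
  conv_rhs => rw [← takeWhile_ne_append_cons_of_mem hM]
  simp [spliceAt_eq_append_cons hM, getLast?_append, getLast?_cons]

theorem IsChain.spliceAt {R : α → α → Prop} (hL : IsChain R L) (hM : IsChain R M)
    (hxL : x ∈ L) (hxM : x ∈ M) : IsChain R (spliceAt x L M) := by
  rw [← takeWhile_ne_append_cons_of_mem hxL] at hL
  rw [← takeWhile_ne_append_cons_of_mem hxM] at hM
  rw [spliceAt_eq_append_cons hxM]
  exact hL.exchange hM

theorem edgeProd_spliceAt_mul {N : Type*} [CommMonoid N] (f : α → α → N)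
    (hL : x ∈ L) (hM : x ∈ M) :
    edgeProd f (spliceAt x L M) * edgeProd f (spliceAt x M L) = edgeProd f L * edgeProd f M := by
  conv_rhs => rw [← takeWhile_ne_append_cons_of_mem hL, ← takeWhile_ne_append_cons_of_mem hM]
  rw [spliceAt_eq_append_cons hM, spliceAt_eq_append_cons hL]
  exact edgeProd_mul_edgeProd_exchange f _ _ _ _ x

end List

theorem Equiv.Perm.exists_inversion_of_ne_one {α : Type*} [LinearOrder α] [WellFoundedLT α]
    {π : Equiv.Perm α} (hπ : π ≠ 1) : ∃ i j, i < j ∧ π j < π i := by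
  by_contra! h
  have hmono : StrictMono π := fun a b hab => (h a b hab).lt_of_ne (π.injective.ne hab.ne)
  have hid : ⇑π = id :=
    (hmono.range_inj strictMono_id).1 (by rw [π.surjective.range_eq, Set.range_id])
  exact hπ (Equiv.ext (congrFun hid))

namespace LGV

open List

variable {ι V : Type*} [LinearOrder ι] [DecidableEq V]

def OnLater (P : ι → List V) (i : ι) (y : V) : Prop :=
  ∃ k, i < k ∧ y ∈ P k

structure IsFirstCrossing (P : ι → List V) (i j : ι) (x : V) : Prop where
  lt : i < j
  mem_left : x ∈ P i
  mem_right : x ∈ P j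
  min_left : ∀ k < i, ∀ y ∈ P k, ¬ OnLater P k y
  first : ∀ y ∈ (P i).takeWhile (· ≠ x), ¬ OnLater P i y
  min_right : ∀ k, i < k → k < j → x ∉ P k

variable {P : ι → List V} {i j i' j' : ι} {x x' : V}

theorem exists_isFirstCrossing [WellFoundedLT ι]
    (h : ∃ i j, i < j ∧ ∃ y ∈ P i, y ∈ P j) : ∃ i j x, IsFirstCrossing P i j x := by
  obtain ⟨i, ⟨y, hyi, hy⟩, hi_min⟩ :=
    wellFounded_lt.has_min {i | ∃ y ∈ P i, OnLater P i y}
      (by obtain ⟨i, j, hij, y, hyi, hyj⟩ := h; exact ⟨i, y, hyi, j, hij, hyj⟩)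
  obtain ⟨x, hxi, ⟨j₀, hij₀, hxj₀⟩, hx_first⟩ :=
    exists_mem_forall_mem_takeWhile_ne ⟨y, hyi, hy⟩
  obtain ⟨j, ⟨hij, hxj⟩, hj_min⟩ :=
    wellFounded_lt.has_min {j | i < j ∧ x ∈ P j} ⟨j₀, hij₀, hxj₀⟩
  exact ⟨i, j, x, hij, hxi, hxj, fun k hk y hy hlater => hi_min k ⟨y, hy, hlater⟩ hk,
    hx_first, fun k hik hkj hxk => hj_min k ⟨hik, hxk⟩ hkj⟩

theorem IsFirstCrossing.unique (h : IsFirstCrossing P i j x)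
    (h' : IsFirstCrossing P i' j' x') : i = i' ∧ j = j' ∧ x = x' := by
  have hi : i = i' := by
    by_contra hne
    rcases lt_or_gt_of_ne hne with hlt | hlt
    · exact h'.min_left i hlt x h.mem_left ⟨j, h.lt, h.mem_right⟩
    · exact h.min_left i' hlt x' h'.mem_left ⟨j', h'.lt, h'.mem_right⟩
  subst hi
  have hx : x = x' := by
    rcases mem_takeWhile_ne_or_eq_or_mem h.mem_left h'.mem_left with hmem | heq | hmem
    · exact absurd ⟨j, h.lt, h.mem_right⟩ (h'.first x hmem)
    · exact heq
    · exact absurd ⟨j', h'.lt, h'.mem_right⟩ (h.first x' hmem)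
  subst hx
  refine ⟨rfl, ?_, rfl⟩
  by_contra hne
  rcases lt_or_gt_of_ne hne with hlt | hlt
  · exact h'.min_right j h.lt hlt h.mem_right
  · exact h.min_right j' h'.lt hlt h'.mem_right

def swapTails (P : ι → List V) (i j : ι) (x : V) (k : ι) : List V :=
  if k = i then spliceAt x (P i) (P j) else if k = j then spliceAt x (P j) (P i) else P k

@[simp] theorem swapTails_left : swapTails P i j x i = spliceAt x (P i) (P j) :=
  if_pos rfl

theorem swapTails_right (hij : i ≠ j) : swapTails P i j x j = spliceAt x (P j) (P i) := by
  rw [swapTails, if_neg hij.symm, if_pos rfl]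

theorem swapTails_of_ne {k : ι} (hki : k ≠ i) (hkj : k ≠ j) : swapTails P i j x k = P k := by
  rw [swapTails, if_neg hki, if_neg hkj]

theorem swapTails_swapTails (hij : i ≠ j) (hi : x ∈ P i) (hj : x ∈ P j) :
    swapTails (swapTails P i j x) i j x = P := by
  funext k
  by_cases hki : k = i
  · subst hki
    rw [swapTails_left, swapTails_left, swapTails_right hij, spliceAt_spliceAt _ _ hj,
      spliceAt_self]
  by_cases hkj : k = j
  · subst hkj
    rw [swapTails_right hij, swapTails_left, swapTails_right hij, spliceAt_spliceAt _ _ hi,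
      spliceAt_self]
  rw [swapTails_of_ne hki hkj, swapTails_of_ne hki hkj]

theorem mem_swapTails {k : ι} {y : V} (hy : y ∈ swapTails P i j x k) :
    y ∈ P k ∨ y ∈ P i ∨ y ∈ P j := by
  unfold swapTails at hy
  split_ifs at hy with hki hkj
  · subst hki
    rcases mem_or_mem_of_mem_spliceAt hy with hy | hy
    exacts [Or.inl hy, Or.inr (Or.inr hy)]
  · rcases mem_or_mem_of_mem_spliceAt hy with hy | hy
    exacts [Or.inr (Or.inr hy), Or.inr (Or.inl hy)]
  · exact Or.inl hy

/-- Without `Nodup`, the tail of `P i` after `x` could revisit a vertex of its initial segment;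
that vertex would then lie on the new list at `j`, producing an earlier crossing. -/
theorem IsFirstCrossing.swapTails (h : IsFirstCrossing P i j x) (hnd : (P i).Nodup) :
    IsFirstCrossing (swapTails P i j x) i j x where
  lt := h.lt
  mem_left := by rw [swapTails_left]; exact mem_spliceAt h.mem_right
  mem_right := by rw [swapTails_right h.lt.ne]; exact mem_spliceAt h.mem_left
  min_left k hk y hy := by
    rintro ⟨m, hkm, hym⟩
    rw [swapTails_of_ne hk.ne (hk.trans h.lt).ne] at hy
    refine h.min_left k hk y hy ?_
    rcases mem_swapTails hym with hym | hym | hym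
    exacts [⟨m, hkm, hym⟩, ⟨i, hk, hym⟩, ⟨j, hk.trans h.lt, hym⟩]
  first y hy := by
    rw [swapTails_left, takeWhile_ne_spliceAt h.mem_right] at hy
    rintro ⟨m, him, hym⟩
    by_cases hmj : m = j
    · subst hmj
      rw [swapTails_right h.lt.ne] at hym
      rcases mem_append.1 hym with hym | hym
      · exact h.first y hy ⟨m, him, (takeWhile_prefix _).subset hym⟩
      · rw [← takeWhile_append_dropWhile (p := (· ≠ x)) (l := P i)] at hnd
        exact disjoint_of_nodup_append hnd hy hym
    · rw [swapTails_of_ne him.ne' hmj] at hym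
      exact h.first y hy ⟨m, him, hym⟩
  min_right k hik hkj := by
    rw [swapTails_of_ne hik.ne' hkj.ne]
    exact h.min_right k hik hkj

theorem prod_edgeProd_swapTails [Fintype ι] {M : Type*} [CommMonoid M] (f : V → V → M)
    (hij : i ≠ j) (hi : x ∈ P i) (hj : x ∈ P j) :
    ∏ k, edgeProd f (swapTails P i j x k) = ∏ k, edgeProd f (P k) := by
  rw [← Finset.prod_mul_prod_compl {i, j},
    ← Finset.prod_mul_prod_compl {i, j} (fun k => edgeProd f (P k)),
    Finset.prod_pair hij, Finset.prod_pair hij, swapTails_left, swapTails_right hij,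
    edgeProd_spliceAt_mul f hi hj]
  congr 1
  refine Finset.prod_congr rfl fun k hk => ?_
  simp only [Finset.mem_compl, Finset.mem_insert, Finset.mem_singleton, not_or] at hk
  rw [swapTails_of_ne hk.1 hk.2]

end LGV

namespace DiPath

variable {V : Type*} {adj : V → V → Prop} {a b a' b' : V}

theorem ext {p q : DiPath V adj a b} (h : p.verts = q.verts) : p = q := by
  cases p; cases q; cases h; rfl

theorem weight_eq_edgeProd {R : Type*} [CommRing R] (w : V → V → R) (p : DiPath V adj a b) :
    p.weight w = p.verts.edgeProd w := rfl

theorem nodup_verts (hacyclic : ∀ x : V, ¬ Relation.TransGen adj x x) (p : DiPath V adj a b) :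
    p.verts.Nodup :=
  have : Std.Irrefl (Relation.TransGen adj) := ⟨hacyclic⟩
  (List.isChain_iff_pairwise.1 (p.chain.imp fun _ _ => Relation.TransGen.single)).nodup

def copy (p : DiPath V adj a b) (ha : a = a') (hb : b = b') : DiPath V adj a' b' where
  verts := p.verts
  verts_ne := p.verts_ne
  head_eq := ha ▸ p.head_eq
  last_eq := hb ▸ p.last_eq
  chain := p.chain

def splice [DecidableEq V] (p : DiPath V adj a b) (q : DiPath V adj a' b') (x : V)
    (hp : x ∈ p.verts) (hq : x ∈ q.verts) : DiPath V adj a b' where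
  verts := List.spliceAt x p.verts q.verts
  verts_ne := List.ne_nil_of_mem (List.mem_spliceAt hq)
  head_eq := (List.head?_spliceAt hp hq).trans p.head_eq
  last_eq := (List.getLast?_spliceAt hq).trans q.last_eq
  chain := p.chain.spliceAt q.chain hp hq

end DiPath

namespace LGV

open Equiv

variable {ι V : Type*} {adj : V → V → Prop} {u v : ι → V}

abbrev Conf (adj : V → V → Prop) (u v : ι → V) : Type _ :=
  Σ π : Perm ι, ∀ i, DiPath V adj (u i) (v (π i))

namespace Conf

def verts (c : Conf adj u v) (k : ι) : List V :=
  (c.2 k).verts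

def IsNonIntersecting (c : Conf adj u v) : Prop :=
  ∀ i j, i ≠ j → ¬ (c.2 i).Intersects (c.2 j)

theorem ext {c d : Conf adj u v} (hπ : c.1 = d.1) (hverts : c.verts = d.verts) : c = d := by
  obtain ⟨π, p⟩ := c
  obtain ⟨π', q⟩ := d
  obtain rfl : π = π' := hπ
  congr
  funext k
  exact DiPath.ext (congrFun hverts k)

variable [LinearOrder ι] [DecidableEq V]

theorem exists_isFirstCrossing [WellFoundedLT ι] {c : Conf adj u v} (h : ¬ c.IsNonIntersecting) :
    ∃ i j x, IsFirstCrossing c.verts i j x := by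
  simp only [IsNonIntersecting, DiPath.Intersects, not_forall, not_not] at h
  obtain ⟨i, j, hij, y, hyi, hyj⟩ := h
  refine LGV.exists_isFirstCrossing ?_
  rcases lt_or_gt_of_ne hij with hlt | hlt
  exacts [⟨i, j, hlt, y, hyi, hyj⟩, ⟨j, i, hlt, y, hyj, hyi⟩]

theorem not_isNonIntersecting {c : Conf adj u v} {i j : ι} {x : V}
    (h : IsFirstCrossing c.verts i j x) : ¬ c.IsNonIntersecting :=
  fun hc => hc i j h.lt.ne ⟨x, h.mem_left, h.mem_right⟩

def flip (c : Conf adj u v) {i j : ι} {x : V} (h : IsFirstCrossing c.verts i j x) :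
    Conf adj u v :=
  ⟨c.1 * swap i j, fun k =>
    if hki : k = i then
      ((c.2 i).splice (c.2 j) x h.mem_left h.mem_right).copy (by rw [hki]) (by simp [hki])
    else if hkj : k = j then
      ((c.2 j).splice (c.2 i) x h.mem_right h.mem_left).copy (by rw [hkj]) (by simp [hkj])
    else (c.2 k).copy rfl (by simp [swap_apply_of_ne_of_ne hki hkj])⟩

variable {c : Conf adj u v} {i j i' j' : ι} {x x' : V}

theorem flip_fst (h : IsFirstCrossing c.verts i j x) : (c.flip h).1 = c.1 * swap i j := rfl

theorem verts_flip (h : IsFirstCrossing c.verts i j x) :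
    (c.flip h).verts = swapTails c.verts i j x := by
  funext k
  simp only [verts, flip, swapTails]
  split_ifs <;> rfl

theorem isFirstCrossing_flip (hacyclic : ∀ x : V, ¬ Relation.TransGen adj x x)
    (h : IsFirstCrossing c.verts i j x) : IsFirstCrossing (c.flip h).verts i j x := by
  rw [verts_flip]
  exact h.swapTails ((c.2 i).nodup_verts hacyclic)

theorem flip_flip (hacyclic : ∀ x : V, ¬ Relation.TransGen adj x x)
    (h : IsFirstCrossing c.verts i j x) (h' : IsFirstCrossing (c.flip h).verts i' j' x') :
    (c.flip h).flip h' = c := by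
  obtain ⟨rfl, rfl, rfl⟩ := (isFirstCrossing_flip hacyclic h).unique h'
  refine ext ?_ ?_
  · rw [flip_fst, flip_fst, mul_assoc, swap_mul_self, mul_one]
  · rw [verts_flip, verts_flip, swapTails_swapTails h.lt.ne h.mem_left h.mem_right]

theorem flip_ne (h : IsFirstCrossing c.verts i j x) : c.flip h ≠ c := fun hc =>
  h.lt.ne (mul_swap_eq_iff.1 (congrArg Sigma.fst hc))

variable [Fintype ι]

def signedWeight {R : Type*} [CommRing R] (w : V → V → R) (c : Conf adj u v) : R :=
  (Perm.sign c.1 : ℤ) • ∏ k, (c.2 k).weight w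

theorem signedWeight_flip {R : Type*} [CommRing R] (w : V → V → R)
    (h : IsFirstCrossing c.verts i j x) : signedWeight w (c.flip h) = - signedWeight w c := by
  have hweight : ∏ k, ((c.flip h).2 k).weight w = ∏ k, (c.2 k).weight w := by
    simp only [DiPath.weight_eq_edgeProd]
    exact (congrArg (fun P => ∏ k, List.edgeProd w (P k)) (verts_flip h)).trans
      (prod_edgeProd_swapTails w h.lt.ne h.mem_left h.mem_right)
  rw [signedWeight, signedWeight, hweight, flip_fst, Perm.sign_mul, Perm.sign_swap h.lt.ne]
  simp

end Conf

open Classical in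
theorem sum_signedWeight_of_not_isNonIntersecting [LinearOrder ι] [WellFoundedLT ι] [Fintype ι]
    [DecidableEq V]
    [∀ a b : V, Fintype (DiPath V adj a b)] {R : Type*} [CommRing R] (w : V → V → R)
    (hacyclic : ∀ x : V, ¬ Relation.TransGen adj x x) :
    ∑ c ∈ Finset.univ.filter (fun c : Conf adj u v => ¬ c.IsNonIntersecting),
      c.signedWeight w = 0 := by
  have hcross (c) (hc : c ∈ Finset.univ.filter fun c : Conf adj u v => ¬ c.IsNonIntersecting) :=
    Conf.exists_isFirstCrossing (Finset.mem_filter.1 hc).2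
  choose I J X hIJX using hcross
  refine Finset.sum_involution (fun c hc => c.flip (hIJX c hc))
    (fun c hc => by rw [Conf.signedWeight_flip, add_neg_cancel])
    (fun c hc _ => Conf.flip_ne _)
    (fun c hc => Finset.mem_filter.2 ⟨Finset.mem_univ _,
      Conf.not_isNonIntersecting (Conf.isFirstCrossing_flip hacyclic _)⟩)
    (fun c hc => Conf.flip_flip hacyclic _ _)

end LGV

open Classical in
/-- Lindström–Gessel–Viennot: if the graph is acyclic and, for every
permutation `π` and every inversion `i < j`, `π i > π j`, any pair of paths
`u i → v (π i)`, `u j → v (π j)` must intersect, then the signed sum over all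
tuples of paths equals the (positive) sum over vertex-disjoint tuples joining
`u i` to `v i`. -/
theorem lgv_lemma (V : Type*) (R : Type*) [CommRing R]
    (adj : V → V → Prop)
    (hacyclic : ∀ x : V, ¬ Relation.TransGen adj x x)
    (w : V → V → R) (l : ℕ) (u v : Fin l → V)
    [hfin : ∀ a b : V, Fintype (DiPath V adj a b)]
    (hcross : ∀ (π : Equiv.Perm (Fin l)) (i j : Fin l), i < j → π j < π i →
      ∀ (p : DiPath V adj (u i) (v (π i))) (q : DiPath V adj (u j) (v (π j))),
        p.Intersects q) :
    (∑ π : Equiv.Perm (Fin l),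
      ((Equiv.Perm.sign π : ℤˣ) : ℤ) •
        ∑ p : (∀ i : Fin l, DiPath V adj (u i) (v (π i))),
          ∏ i : Fin l, (p i).weight w) =
    ∑ p : (∀ i : Fin l, DiPath V adj (u i) (v i)),
      if ∀ i j : Fin l, i ≠ j → ¬ (p i).Intersects (p j) then
        ∏ i : Fin l, (p i).weight w
      else 0 := by
  open LGV in
  calc _ = ∑ c : Conf adj u v, c.signedWeight w := by
        simp only [Fintype.sum_sigma, Conf.signedWeight, Finset.smul_sum]
    _ = ∑ c : Conf adj u v, if c.IsNonIntersecting then c.signedWeight w else 0 := by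
        rw [← Finset.sum_filter_add_sum_filter_not _ Conf.IsNonIntersecting,
          sum_signedWeight_of_not_isNonIntersecting w hacyclic, add_zero, Finset.sum_filter]
    _ = _ := by
      rw [Fintype.sum_sigma, Fintype.sum_eq_single 1 fun π hπ => ?_]
      · simp only [Conf.signedWeight, Equiv.Perm.sign_one, Units.val_one, one_smul]
        exact Finset.sum_congr rfl fun p _ => if_congr Iff.rfl rfl rfl
      · obtain ⟨i, j, hij, hπij⟩ := Equiv.Perm.exists_inversion_of_ne_one hπ
        exact Finset.sum_eq_zero fun p _ =>
          if_neg fun hp => hp i j hij.ne (hcross π i j hij hπij (p i) (p j))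
end

section
/- Let $\mathcal{Z}$ be the commutative $\mathbb{Z}$-algebra generated by $z_{i,a}, z_{\bar{i},a}$ ($1\le i\le n$, $a\in\mathbb{C}$) subject to the relations $z_{i,a} z_{\bar{i}, a-2n+2i-4} = z_{i-1,a} z_{\overline{i-1}, a-2n+2i-4}$ for $i = 1, \dots, n$ (with $z_{0,a} = z_{\bar{0},a} = 1$). Then $\mathcal{Z}$ is isomorphic as a ring to the Laurent polynomial ring $\mathcal{Y} = \mathbb{Z}[Y_{i,a}^{\pm 1}]_{1\le i\le n, a\in\mathbb{C}}$, via $z_{i,a} \mapsto Y_{i,a+i-1} Y_{i-1,a+i}^{-1}$ and $z_{\bar{i},a} \mapsto Y_{i-1,a+2n-i+2} Y_{i,a+2n-i+3}^{-1}$ (with $Y_{0,a} = 1$). -/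
/-!
STATEMENT 11: The commutative ring `𝒵` generated by `z_{i,a}, z_{ī,a}`
(`1 ≤ i ≤ n`, `a ∈ ℂ`) with relations
`z_{i,a} z_{ī, a-2n+2i-4} = z_{i-1,a} z_{\overline{i-1}, a-2n+2i-4}`
(`z_{0,a} = z_{0̄,a} = 1`) is isomorphic to the Laurent polynomial ring
`𝒴 = ℤ[Y_{i,a}^{±1}]` via `z_{i,a} ↦ Y_{i,a+i-1} Y_{i-1,a+i}^{-1}` and
`z_{ī,a} ↦ Y_{i-1,a+2n-i+2} Y_{i,a+2n-i+3}^{-1}` (`Y_{0,a} = 1`).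
Here indices `i : Fin n` encode the value `i+1 ∈ {1, …, n}`.
-/

open MvPolynomial

/-- Generators `z_{i,a}` (`Sum.inl i` for `z_{i+1,a}`, `Sum.inr i` for
`z_{\overline{i+1},a}`). -/
abbrev CnGen (n : ℕ) : Type := (Fin n ⊕ Fin n) × ℂ

/-- The set of defining relations of `𝒵` (type `Cₙ`). -/
noncomputable def CnRel (n : ℕ) : Set (MvPolynomial (CnGen n) ℤ) :=
  { p | ∃ (i : Fin n) (a : ℂ),
      p = X (Sum.inl i, a) * X (Sum.inr i, a - 2 * n + 2 * (i : ℕ) - 2) -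
        (if h : (i : ℕ) = 0 then 1 else
          X (Sum.inl ⟨(i : ℕ) - 1, by have := i.isLt; omega⟩, a) *
            X (Sum.inr ⟨(i : ℕ) - 1, by have := i.isLt; omega⟩,
              a - 2 * n + 2 * (i : ℕ) - 2)) }

/-- The ring `𝒵`. -/
abbrev CnZ (n : ℕ) : Type := MvPolynomial (CnGen n) ℤ ⧸ Ideal.span (CnRel n)

/-- The Laurent polynomial ring `𝒴 = ℤ[Y_{i,a}^{±1}]`, as the group algebra
of the free abelian group on the symbols `Y_{i,a}` (`i : Fin n` encoding
`i+1`, `a : ℂ`). -/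
abbrev CnY (n : ℕ) : Type := AddMonoidAlgebra ℤ ((Fin n × ℂ) →₀ ℤ)

/-- The Laurent monomial with exponent vector `g`. -/
noncomputable def Ymon (n : ℕ) (g : (Fin n × ℂ) →₀ ℤ) : CnY n :=
  AddMonoidAlgebra.single g 1

/-!
Both sides of the `i`-th relation go to `Y_{i-1,a+i-2} Y_{i-1,a+i}⁻¹`, so the assignment of the
statement defines a ring map `𝒵 → 𝒴`. Conversely, induction on `i` from
`z_{1,a} z_{1̄,a-2n-2} = 1` along the relations shows that every generator of `𝒵` is a unit; once
the `z_{i,a}` are units the relations determine the `z_{ī,a}`, so a ring map out of `𝒵` is fixed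
by its values on the `z_{i,a}`. Hence `Y_{i,a} ↦ ∏_{k=1}^{i} z_{k,a+i-2k+1}` defines a ring map
`𝒴 → 𝒵`, and both composites are the identity: on the `Y_{i,a}` because the images of the
`z_{k,·}` telescope, on the `z_{i,a}` because consecutive products differ by one factor.
-/

theorem Finsupp.closure_range_single_one (α : Type*) :
    AddSubgroup.closure (Set.range fun a : α => Finsupp.single a (1 : ℤ)) = ⊤ := by
  rw [← Submodule.span_int_eq_addSubgroupClosure, ← Finsupp.coe_basisSingleOne,
    Finsupp.basisSingleOne.span_eq, Submodule.top_toAddSubgroup]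

theorem AddMonoidAlgebra.ringHom_ext_single_single {α R : Type*} [Semiring R]
    {f g : AddMonoidAlgebra ℤ (α →₀ ℤ) →+* R}
    (h : ∀ a, f (single (Finsupp.single a 1) 1) = g (single (Finsupp.single a 1) 1)) :
    f = g := by
  refine AddMonoidAlgebra.ringHom_ext' (RingHom.ext_int _ _) ?_
  refine MonoidHom.eq_of_eqOn_dense
    (s := Multiplicative.toAdd ⁻¹' Set.range fun a => Finsupp.single a 1) ?_ ?_
  · rw [← AddSubgroup.toSubgroup_closure, Finsupp.closure_range_single_one]
    rfl
  · rintro x ⟨a, ha⟩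
    rw [← ofAdd_toAdd x, ← ha]
    exact h a

namespace CnZ

variable {n : ℕ}

noncomputable def gen (g : CnGen n) : CnZ n := Ideal.Quotient.mk _ (X g)

theorem gen_inl_mul_gen_inr (i : Fin n) (a : ℂ) :
    gen (Sum.inl i, a) * gen (Sum.inr i, a - 2 * n + 2 * (i : ℕ) - 2) =
      if h : (i : ℕ) = 0 then 1 else
        gen (Sum.inl ⟨(i : ℕ) - 1, by have := i.isLt; omega⟩, a) *
          gen (Sum.inr ⟨(i : ℕ) - 1, by have := i.isLt; omega⟩, a - 2 * n + 2 * (i : ℕ) - 2) := by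
  have hrel := Ideal.Quotient.eq_zero_iff_mem.mpr
    (Ideal.subset_span (show _ ∈ CnRel n from ⟨i, a, rfl⟩))
  rw [map_sub, sub_eq_zero] at hrel
  split_ifs at hrel ⊢ <;> simpa [gen] using hrel

theorem gen_inl_mul_gen_inr_zero (h : 0 < n) {a b : ℂ} (hab : b = a - 2 * n - 2) :
    gen (Sum.inl ⟨0, h⟩, a) * gen (Sum.inr ⟨0, h⟩, b) = 1 := by
  simpa [hab] using gen_inl_mul_gen_inr ⟨0, h⟩ a

theorem gen_inl_mul_gen_inr_succ {k : ℕ} (hk : k + 1 < n) {a b : ℂ}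
    (hab : b = a - 2 * n + 2 * k) :
    gen (Sum.inl ⟨k + 1, hk⟩, a) * gen (Sum.inr ⟨k + 1, hk⟩, b) =
      gen (Sum.inl ⟨k, by omega⟩, a) * gen (Sum.inr ⟨k, by omega⟩, b) := by
  have hb : b = a - 2 * n + 2 * ((k + 1 : ℕ) : ℂ) - 2 := by rw [hab]; push_cast; ring
  simpa [hb] using gen_inl_mul_gen_inr ⟨k + 1, hk⟩ a

theorem isUnit_gen (g : CnGen n) : IsUnit (gen g) := by
  suffices h : ∀ k (hk : k < n) (a : ℂ),
      IsUnit (gen (Sum.inl ⟨k, hk⟩, a)) ∧ IsUnit (gen (Sum.inr ⟨k, hk⟩, a)) by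
    obtain ⟨i | i, a⟩ := g
    exacts [(h i i.isLt a).1, (h i i.isLt a).2]
  intro k
  induction k with
  | zero =>
    intro hk a
    exact ⟨.of_mul_eq_one _ (gen_inl_mul_gen_inr_zero hk rfl),
      .of_mul_eq_one_right _ (gen_inl_mul_gen_inr_zero hk (a := a + 2 * n + 2) (by ring))⟩
  | succ k ih =>
    intro hk a
    have hk' : k < n := by omega
    have hprod (a b : ℂ) : IsUnit (gen (Sum.inl ⟨k, hk'⟩, a) * gen (Sum.inr ⟨k, hk'⟩, b)) :=
      (ih hk' a).1.mul (ih hk' b).2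
    constructor
    · exact isUnit_of_mul_isUnit_left ((gen_inl_mul_gen_inr_succ hk rfl).symm ▸ hprod _ _)
    · exact isUnit_of_mul_isUnit_right
        ((gen_inl_mul_gen_inr_succ hk (a := a + 2 * n - 2 * k) (by ring)).symm ▸ hprod _ _)

theorem ringHom_ext {R : Type*} [Semiring R] {f g : CnZ n →+* R}
    (h : ∀ i a, f (gen (Sum.inl i, a)) = g (gen (Sum.inl i, a))) : f = g := by
  have hinr : ∀ k (hk : k < n) (b : ℂ),
      f (gen (Sum.inr ⟨k, hk⟩, b)) = g (gen (Sum.inr ⟨k, hk⟩, b)) := by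
    intro k
    induction k with
    | zero =>
      intro hk b
      have hrel := gen_inl_mul_gen_inr_zero hk (a := b + 2 * n + 2) (b := b) (by ring)
      have hf := congrArg f hrel
      have hg := congrArg g hrel
      rw [map_mul, map_one] at hf hg
      exact ((isUnit_gen _).map f).mul_left_cancel (by rw [hf, h, hg])
    | succ k ih =>
      intro hk b
      have hrel := gen_inl_mul_gen_inr_succ hk (a := b + 2 * n - 2 * k) (b := b) (by ring)
      have hf := congrArg f hrel
      have hg := congrArg g hrel
      simp only [map_mul] at hf hg
      exact ((isUnit_gen _).map f).mul_left_cancel (by rw [hf, h, ih, ← hg, h])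
  refine Ideal.Quotient.ringHom_ext (MvPolynomial.ringHom_ext' (RingHom.ext_int _ _) ?_)
  rintro ⟨i | ⟨k, hk⟩, a⟩
  exacts [h i a, hinr k hk a]

end CnZ

namespace CnY

theorem Ymon_add {n : ℕ} (g h : (Fin n × ℂ) →₀ ℤ) : Ymon n (g + h) = Ymon n g * Ymon n h := by
  simp [Ymon, AddMonoidAlgebra.single_mul_single]

/-- The exponent vector of `Y_{k,b}` in the paper's indexing `1 ≤ k ≤ n`, with `Y_{0,b} = 1`
(the value for `k > n` is junk). -/
noncomputable def yExp (n : ℕ) : ℕ → ℂ → (Fin n × ℂ) →₀ ℤ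
  | 0, _ => 0
  | k + 1, b => if h : k < n then Finsupp.single (⟨k, h⟩, b) 1 else 0

theorem yExp_succ {n : ℕ} (i : Fin n) (b : ℂ) :
    yExp n ((i : ℕ) + 1) b = Finsupp.single (i, b) 1 := by
  simp [yExp, i.isLt]

theorem yExp_fin {n : ℕ} (i : Fin n) (b : ℂ) :
    yExp n i b = if h : (i : ℕ) = 0 then 0 else
      Finsupp.single ((⟨(i : ℕ) - 1, by have := i.isLt; omega⟩ : Fin n), b) 1 := by
  obtain ⟨_ | k, hk⟩ := i
  · rfl
  · exact yExp_succ ⟨k, by omega⟩ b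

/-- The exponent of the image of a generator; `i : Fin n` stands for the paper's `i + 1`. -/
noncomputable def genExp {n : ℕ} : CnGen n → (Fin n × ℂ) →₀ ℤ
  | (Sum.inl i, a) => yExp n ((i : ℕ) + 1) (a + (i : ℕ)) - yExp n i (a + (i : ℕ) + 1)
  | (Sum.inr i, a) =>
    yExp n i (a + 2 * n - (i : ℕ) + 1) - yExp n ((i : ℕ) + 1) (a + 2 * n - (i : ℕ) + 2)

theorem genExp_inl_add_genExp_inr {n : ℕ} (i : Fin n) (a : ℂ) :
    genExp (Sum.inl i, a) + genExp (Sum.inr i, a - 2 * n + 2 * (i : ℕ) - 2) =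
      if h : (i : ℕ) = 0 then 0 else
        genExp (Sum.inl ⟨(i : ℕ) - 1, by have := i.isLt; omega⟩, a) +
          genExp (Sum.inr ⟨(i : ℕ) - 1, by have := i.isLt; omega⟩,
            a - 2 * n + 2 * (i : ℕ) - 2) := by
  obtain ⟨_ | k, hk⟩ := i
  · simp only [genExp, dif_pos]
    push_cast
    ring_nf
    abel
  · simp only [genExp, Nat.add_one_ne_zero, Nat.add_sub_cancel]
    push_cast
    ring_nf
    abel

end CnY

namespace CnZ

noncomputable def toCnY (n : ℕ) : CnZ n →+* CnY n :=
  Ideal.Quotient.lift _ (eval₂Hom (Int.castRingHom _) fun g => Ymon n (CnY.genExp g))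
    fun _ hp => RingHom.mem_ker.mp <| Ideal.span_le.mpr (by
      rintro _ ⟨i, a, rfl⟩
      rw [SetLike.mem_coe, RingHom.mem_ker, map_sub, sub_eq_zero, map_mul, eval₂Hom_X',
        eval₂Hom_X', ← CnY.Ymon_add, CnY.genExp_inl_add_genExp_inr]
      split_ifs
      · exact (map_one _).symm
      · simp [CnY.Ymon_add]) hp

theorem toCnY_gen {n : ℕ} (g : CnGen n) : toCnY n (gen g) = Ymon n (CnY.genExp g) := by
  simp [toCnY, gen]

/-- The paper's preimage `∏_{j=1}^{k} z_{j,b+k-2j+1}` of `Y_{k,b}`. -/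
noncomputable def yUnit (n : ℕ) : ℕ → ℂ → (CnZ n)ˣ
  | 0, _ => 1
  | k + 1, b =>
    yUnit n k (b + 1) * if h : k < n then (isUnit_gen (Sum.inl ⟨k, h⟩, b - k)).unit else 1

theorem toCnY_yUnit {n k : ℕ} (hk : k ≤ n) (b : ℂ) :
    toCnY n (yUnit n k b) = Ymon n (CnY.yExp n k b) := by
  induction k generalizing b with
  | zero => exact map_one _
  | succ k ih =>
    have hk' : k < n := by omega
    rw [yUnit, dif_pos hk', Units.val_mul, map_mul, ih (by omega), IsUnit.unit_spec, toCnY_gen,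
      ← CnY.Ymon_add, CnY.genExp]
    congr 1
    simp only [sub_add_cancel]
    abel

noncomputable def yUnitHom (n : ℕ) : ((Fin n × ℂ) →₀ ℤ) →+ Additive (CnZ n)ˣ :=
  Finsupp.liftAddHom (M := ℤ) (N := Additive (CnZ n)ˣ) fun p : Fin n × ℂ =>
    zmultiplesHom _ (Additive.ofMul (yUnit n ((p.1 : ℕ) + 1) p.2))

theorem yUnitHom_yExp {n k : ℕ} (hk : k ≤ n) (b : ℂ) :
    yUnitHom n (CnY.yExp n k b) = Additive.ofMul (yUnit n k b) := by
  cases k with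
  | zero => exact map_zero _
  | succ k =>
    rw [CnY.yExp_succ ⟨k, hk⟩]
    simp [yUnitHom]

end CnZ

namespace CnY

noncomputable def toCnZ (n : ℕ) : CnY n →+* CnZ n :=
  AddMonoidAlgebra.lift ℤ (CnZ n) _
    ((Units.coeHom _).comp (AddMonoidHom.toMultiplicativeLeft (CnZ.yUnitHom n)))

theorem toCnZ_Ymon_yExp {n k : ℕ} (hk : k ≤ n) (b : ℂ) :
    toCnZ n (Ymon n (yExp n k b)) = CnZ.yUnit n k b := by
  show AddMonoidAlgebra.lift ℤ (CnZ n) _ _ (AddMonoidAlgebra.single _ 1) = _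
  rw [AddMonoidAlgebra.lift_single, one_smul]
  exact congrArg (fun u => ((Additive.toMul u : (CnZ n)ˣ) : CnZ n)) (CnZ.yUnitHom_yExp hk b)

theorem toCnZ_comp_toCnY (n : ℕ) : (toCnZ n).comp (CnZ.toCnY n) = RingHom.id _ := by
  refine CnZ.ringHom_ext fun i a => ?_
  have hmul : toCnZ n (Ymon n (genExp (Sum.inl i, a))) * CnZ.yUnit n i (a + (i : ℕ) + 1) =
      CnZ.gen (Sum.inl i, a) * CnZ.yUnit n i (a + (i : ℕ) + 1) :=
    calc _ = toCnZ n (Ymon n (genExp (Sum.inl i, a) + yExp n i (a + (i : ℕ) + 1))) := by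
          rw [Ymon_add, map_mul, toCnZ_Ymon_yExp i.isLt.le]
      _ = CnZ.yUnit n ((i : ℕ) + 1) (a + (i : ℕ)) := by
          rw [genExp, sub_add_cancel, toCnZ_Ymon_yExp i.isLt]
      _ = _ := by
          rw [CnZ.yUnit, dif_pos i.isLt, Units.val_mul, IsUnit.unit_spec, add_sub_cancel_right]
          exact mul_comm _ _
  rw [RingHom.comp_apply, CnZ.toCnY_gen, RingHom.id_apply]
  exact (Units.isUnit _).mul_right_cancel hmul

end CnY

theorem CnZ.toCnY_comp_toCnZ (n : ℕ) : (toCnY n).comp (CnY.toCnZ n) = RingHom.id _ := by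
  refine AddMonoidAlgebra.ringHom_ext_single_single fun p => ?_
  show toCnY n (CnY.toCnZ n (Ymon n _)) = Ymon n _
  rw [← CnY.yExp_succ, CnY.toCnZ_Ymon_yExp p.1.isLt, toCnY_yUnit p.1.isLt]

theorem CnZ_iso_CnY (n : ℕ) :
    ∃ e : CnZ n ≃+* CnY n,
      ∀ (i : Fin n) (a : ℂ),
        (e (Ideal.Quotient.mk _ (X (Sum.inl i, a))) =
          Ymon n (Finsupp.single (i, a + (i : ℕ)) 1 -
            (if h : (i : ℕ) = 0 then 0 else
              Finsupp.single
                ((⟨(i : ℕ) - 1, by have := i.isLt; omega⟩ : Fin n),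
                  a + (i : ℕ) + 1) 1))) ∧
        (e (Ideal.Quotient.mk _ (X (Sum.inr i, a))) =
          Ymon n ((if h : (i : ℕ) = 0 then 0 else
              Finsupp.single
                ((⟨(i : ℕ) - 1, by have := i.isLt; omega⟩ : Fin n),
                  a + 2 * n - (i : ℕ) + 1) 1) -
            Finsupp.single (i, a + 2 * n - (i : ℕ) + 2) 1)) := by
  refine ⟨.ofRingHom (CnZ.toCnY n) (CnY.toCnZ n) (CnZ.toCnY_comp_toCnZ n)
    (CnY.toCnZ_comp_toCnY n), fun i a => ⟨?_, ?_⟩⟩ <;>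
  · show CnZ.toCnY n (CnZ.gen _) = _
    rw [CnZ.toCnY_gen, CnY.genExp, CnY.yExp_succ, CnY.yExp_fin]
end

section
/- In the $C_n$ path model: for $h$-paths of type $C_n$ (monotone north/east lattice paths from height $-n$ to height $n$ with an even number of east steps at height $0$), the generating function identity $\{\prod_{k=n}^{1}(1-z_{\bar{k}}x)^{-1}\}(1 - z_n z_{\bar{n}} x^2)^{-1}\{\prod_{k=n}^{1}(1-z_k x)^{-1}\}$ (taken in a commutative ring of the variables $z_1,\dots,z_n,z_{\bar n},\dots,z_{\bar 1}$) has $x^r$-coefficient equal to the sum over all such paths with exactly $r$ east steps of the product of their step labels, where an east step at height $y < 0$ is labeled $z_{n+1+y}$, at height $y > 0$ is labeled $z_{\overline{n+1-y}}$, and the east steps at height $0$ are labeled alternately $z_{\bar n}, z_n, z_{\bar n}, z_n, \dots$. -/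
/-!
STATEMENT 12 (type `Cₙ` path model, commutative specialization):
the series `{∏_{k=n}^{1}(1-z_{k̄}x)^{-1}} (1-z_n z_{n̄} x²)^{-1}
{∏_{k=n}^{1}(1-z_k x)^{-1}}` has `x^r`-coefficient equal to the sum, over all
monotone north/east lattice paths from height `-n` to height `n` with evenly
many east steps at height `0` and exactly `r` east steps, of the products of
their step labels: an east step at height `y < 0` is labelled `z_{n+1+y}`,
at height `y > 0` it is labelled `z_{\overline{n+1-y}}`, and the east steps at
height `0` are labelled alternately `z_{n̄}, z_n, z_{n̄}, z_n, …`.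

A path (with fixed starting x-coordinate) is encoded by its word
`w : List Bool` (`true` = north, `false` = east) with `2n` north steps.
Variables: `Sum.inl m ↦ z_m`, `Sum.inr m ↦ z_{m̄}` (`1 ≤ m ≤ n`).
-/

open MvPolynomial

/-- Number of north steps strictly before position `p`. -/
def northsBefore (w : List Bool) (p : ℕ) : ℕ := (w.take p).count true

/-- Number of east steps at height `0` strictly before position `p`
(for a path starting at height `-n`). -/
def zeroEastsBefore (n : ℕ) (w : List Bool) (p : ℕ) : ℕ :=
  ((Finset.range p).filter fun q =>
    w.getD q true = false ∧ northsBefore w q = n).card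

/-- Total number of east steps at height `0`. -/
def zeroEasts (n : ℕ) (w : List Bool) : ℕ := zeroEastsBefore n w w.length

/-- The label of the east step at position `p` of the word `w`. -/
def stepVar (n : ℕ) (w : List Bool) (p : ℕ) : ℕ ⊕ ℕ :=
  let k := northsBefore w p
  if k < n then Sum.inl (k + 1)
  else if k = n then
    (if Even (zeroEastsBefore n w p) then Sum.inr n else Sum.inl n)
  else Sum.inr (2 * n + 1 - k)

/-- The weight of the path word `w`: the product of the labels of its east
steps. -/
noncomputable def wordWeight (n : ℕ) (w : List Bool) : MvPolynomial (ℕ ⊕ ℕ) ℤ :=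
  ∏ p ∈ Finset.range w.length,
    if w.getD p true = false then X (stepVar n w p) else 1

/-- The sum of the weights of all `h`-paths of type `Cₙ` with `r` east
steps: words of length `2n + r` with `2n` north steps and evenly many east
steps at height `0`. -/
noncomputable def cPathSum (n r : ℕ) : MvPolynomial (ℕ ⊕ ℕ) ℤ :=
  ∑ f : Fin (2 * n + r) → Bool,
    if (List.ofFn f).count true = 2 * n ∧ Even (zeroEasts n (List.ofFn f))
    then wordWeight n (List.ofFn f) else 0

/-!
Let `F_m` be the generating series, by number of east steps, of the paths from height `-n` to
height `m - n` with evenly many east steps at height `0`. Removing the last step of a path gives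
`F_{m+1} (1 - z x) = F_m` away from the axis, where `z` is the label of an east step at height
`m + 1 - n`; at height `0` the labels alternate, so one removes a pair of east steps at once and
gets `F_n (1 - z_n z_{n̄} x²) = F_{n-1}`; finally `F_0 (1 - z_1 x) = 1`. Multiplying `F_{2n}` by
the factors of the denominator in order therefore telescopes down to `1`.
-/

lemma PowerSeries.mk_mul_one_sub_C_mul_X_pow {R : Type*} [Ring R] {a b : ℕ → R} {u : R}
    {k : ℕ} (hlow : ∀ r < k, a r = b r) (hrec : ∀ r, a (r + k) = a r * u + b (r + k)) :
    mk a * (1 - C u * X ^ k) = mk b := by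
  ext r
  rw [mul_sub, mul_one, ← mul_assoc, map_sub, coeff_mul_X_pow', coeff_mk, coeff_mk]
  split_ifs with hr
  · obtain ⟨s, rfl⟩ := Nat.exists_eq_add_of_le' hr
    rw [Nat.add_sub_cancel, coeff_mul_C, coeff_mk, hrec, add_sub_cancel_left]
  · rw [sub_zero, hlow r (not_le.mp hr)]

section Words

variable {n : ℕ}

lemma northsBefore_append_of_le {w : List Bool} (v : List Bool) {p : ℕ} (hp : p ≤ w.length) :
    northsBefore (w ++ v) p = northsBefore w p := by
  rw [northsBefore, List.take_append_of_le_length hp, northsBefore]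

lemma zeroEastsBefore_append_of_le {w : List Bool} (v : List Bool) {p : ℕ}
    (hp : p ≤ w.length) : zeroEastsBefore n (w ++ v) p = zeroEastsBefore n w p := by
  unfold zeroEastsBefore
  refine congrArg _ (Finset.filter_congr fun q hq => ?_)
  have hq : q < w.length := (Finset.mem_range.mp hq).trans_le hp
  rw [List.getD_append _ _ _ _ hq, northsBefore_append_of_le v hq.le]

lemma stepVar_append_of_le {w : List Bool} (v : List Bool) {p : ℕ} (hp : p ≤ w.length) :
    stepVar n (w ++ v) p = stepVar n w p := by
  unfold stepVar
  rw [northsBefore_append_of_le v hp, zeroEastsBefore_append_of_le v hp]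

lemma northsBefore_length (w : List Bool) : northsBefore w w.length = w.count true := by
  rw [northsBefore, List.take_length]

lemma zeroEasts_append_singleton (w : List Bool) (b : Bool) :
    zeroEasts n (w ++ [b]) =
      zeroEasts n w + if b = false ∧ w.count true = n then 1 else 0 := by
  have hlast : (w ++ [b]).getD w.length true = b := by simp
  rw [zeroEasts, List.length_append, List.length_singleton, zeroEastsBefore,
    Finset.range_add_one, Finset.filter_insert, hlast, northsBefore_append_of_le _ le_rfl,
    northsBefore_length]
  split_ifs with h
  · rw [Finset.card_insert_of_notMem (by simp), ← zeroEastsBefore,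
      zeroEastsBefore_append_of_le _ le_rfl, zeroEasts]
  · rw [← zeroEastsBefore, zeroEastsBefore_append_of_le _ le_rfl, zeroEasts, add_zero]

lemma wordWeight_append_singleton (w : List Bool) (b : Bool) :
    wordWeight n (w ++ [b]) =
      wordWeight n w * if b = false then X (stepVar n w w.length) else 1 := by
  rw [wordWeight, List.length_append, List.length_singleton, Finset.prod_range_succ,
    stepVar_append_of_le _ le_rfl, wordWeight]
  congr 1
  · refine Finset.prod_congr rfl fun p hp => ?_
    have hp : p < w.length := Finset.mem_range.mp hp
    rw [List.getD_append _ _ _ _ hp, stepVar_append_of_le _ hp.le]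
  · simp

end Words

section PathSums

variable {n : ℕ}

/-- `e` records whether the path has evenly many east steps at height `0`. -/
noncomputable def pathTerm (n : ℕ) (e : Bool) (m : ℕ) (w : List Bool) :
    MvPolynomial (ℕ ⊕ ℕ) ℤ :=
  if w.count true = m ∧ decide (Even (zeroEasts n w)) = e then wordWeight n w else 0

noncomputable def pathSum (n : ℕ) (e : Bool) (m L : ℕ) : MvPolynomial (ℕ ⊕ ℕ) ℤ :=
  ∑ f : Fin L → Bool, pathTerm n e m (List.ofFn f)

/-- The label of an east step at height `m - n` away from the axis. -/
def eastLabel (n m : ℕ) : ℕ ⊕ ℕ :=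
  if m < n then Sum.inl (m + 1) else Sum.inr (2 * n + 1 - m)

lemma stepVar_length (w : List Bool) :
    stepVar n w w.length =
      if w.count true = n then (if Even (zeroEasts n w) then Sum.inr n else Sum.inl n)
      else eastLabel n (w.count true) := by
  rw [stepVar, eastLabel, northsBefore_length, ← zeroEasts]
  split_ifs <;> first | rfl | omega

lemma zeroEasts_eq_zero_of_count_lt {w : List Bool} (h : w.count true < n) :
    zeroEasts n w = 0 := by
  rw [zeroEasts, zeroEastsBefore, Finset.card_eq_zero, Finset.filter_eq_empty_iff]
  rintro q - ⟨-, hq⟩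
  have : northsBefore w q ≤ w.count true := (List.take_sublist q w).count_le true
  omega

lemma zeroEasts_replicate_true (m : ℕ) : zeroEasts n (List.replicate m true) = 0 := by
  rw [zeroEasts, zeroEastsBefore, Finset.card_eq_zero, Finset.filter_eq_empty_iff]
  simp

lemma wordWeight_replicate_true (m : ℕ) : wordWeight n (List.replicate m true) = 1 :=
  Finset.prod_eq_one fun p _ => by simp

lemma cPathSum_eq_pathSum (r : ℕ) : cPathSum n r = pathSum n true (2 * n) (2 * n + r) := by
  simp only [cPathSum, pathSum, pathTerm, decide_eq_true_iff]

lemma pathTerm_append_true (e : Bool) (m : ℕ) (w : List Bool) :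
    pathTerm n e (m + 1) (w ++ [true]) = pathTerm n e m w := by
  simp [pathTerm, zeroEasts_append_singleton, wordWeight_append_singleton]

lemma pathTerm_zero_append_true (e : Bool) (w : List Bool) :
    pathTerm n e 0 (w ++ [true]) = 0 := by
  simp [pathTerm]

lemma pathTerm_append_false_of_ne {m : ℕ} (hm : m ≠ n) (e : Bool) (w : List Bool) :
    pathTerm n e m (w ++ [false]) = X (eastLabel n m) * pathTerm n e m w := by
  by_cases hw : w.count true = m
  · subst hw
    simp [pathTerm, zeroEasts_append_singleton, wordWeight_append_singleton, stepVar_length, hm,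
      mul_comm]
  · simp [pathTerm, hw]

lemma pathTerm_self_append_false (e : Bool) (w : List Bool) :
    pathTerm n e n (w ++ [false]) =
      X (if e then Sum.inl n else Sum.inr n) * pathTerm n (!e) n w := by
  by_cases hw : w.count true = n
  · cases e <;>
    simp +contextual [pathTerm, zeroEasts_append_singleton, wordWeight_append_singleton,
      stepVar_length, hw, Nat.even_add_one, -Nat.not_even_iff_odd, mul_comm]
  · simp [pathTerm, hw]

lemma pathSum_succ (e : Bool) (m L : ℕ) :
    pathSum n e m (L + 1) =
      (∑ g : Fin L → Bool, pathTerm n e m (List.ofFn g ++ [false])) +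
        ∑ g : Fin L → Bool, pathTerm n e m (List.ofFn g ++ [true]) := by
  rw [pathSum, ← (Fin.snocEquiv fun _ => Bool).sum_comp, Fintype.sum_prod_type_right,
    ← Finset.sum_add_distrib]
  refine Finset.sum_congr rfl fun g _ => ?_
  have ofFn_snoc (b : Bool) : List.ofFn (Fin.snoc g b) = List.ofFn g ++ [b] := by
    rw [List.ofFn_succ', List.concat_eq_append]
    simp only [Fin.snoc_castSucc, Fin.snoc_last]
  rw [Fintype.sum_bool, add_comm]
  simp only [Fin.snocEquiv, Equiv.coe_fn_mk, ofFn_snoc]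

lemma pathSum_succ_succ_of_ne {m : ℕ} (hm : m + 1 ≠ n) (e : Bool) (L : ℕ) :
    pathSum n e (m + 1) (L + 1) =
      X (eastLabel n (m + 1)) * pathSum n e (m + 1) L + pathSum n e m L := by
  rw [pathSum_succ]
  simp only [pathTerm_append_false_of_ne hm, pathTerm_append_true, pathSum,
    Finset.mul_sum]

lemma pathSum_zero_succ (hn : n ≠ 0) (e : Bool) (L : ℕ) :
    pathSum n e 0 (L + 1) = X (eastLabel n 0) * pathSum n e 0 L := by
  rw [pathSum_succ]
  simp only [pathTerm_append_false_of_ne hn.symm, pathTerm_zero_append_true,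
    pathSum, Finset.mul_sum, Finset.sum_const_zero, add_zero]

lemma pathSum_self_succ (e : Bool) (L : ℕ) :
    pathSum (n + 1) e (n + 1) (L + 1) =
      X (if e then Sum.inl (n + 1) else Sum.inr (n + 1)) * pathSum (n + 1) (!e) (n + 1) L +
        pathSum (n + 1) e n L := by
  rw [pathSum_succ]
  simp only [pathTerm_self_append_false, pathTerm_append_true, pathSum,
    Finset.mul_sum]

lemma pathSum_diag (e : Bool) (m : ℕ) : pathSum n e m m = if e then 1 else 0 := by
  rw [pathSum, Finset.sum_eq_single_of_mem (fun _ => true) (Finset.mem_univ _)]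
  · simp [pathTerm, zeroEasts_replicate_true, wordWeight_replicate_true]
  · intro f _ hf
    refine if_neg fun ⟨hcount, _⟩ => hf (funext fun i => ?_)
    have hall := List.count_eq_length.mp (hcount.trans List.length_ofFn.symm)
    exact (hall _ (List.mem_ofFn.mpr ⟨i, rfl⟩)).symm

lemma pathSum_false_of_lt {m : ℕ} (hm : m < n) (L : ℕ) : pathSum n false m L = 0 :=
  Finset.sum_eq_zero fun f _ => if_neg fun ⟨hcount, heven⟩ => by
    simp [zeroEasts_eq_zero_of_count_lt (hcount ▸ hm)] at heven

end PathSums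

section PathSeries

variable {n : ℕ}

/-- The series `F_m`: paths ending at height `m - n`, with evenly many east steps at height `0`. -/
noncomputable def pathSeries (n m : ℕ) : PowerSeries (MvPolynomial (ℕ ⊕ ℕ) ℤ) :=
  PowerSeries.mk fun r => pathSum n true m (m + r)

lemma pathSeries_succ_mul_of_ne {m : ℕ} (hm : m + 1 ≠ n) :
    pathSeries n (m + 1) * (1 - PowerSeries.C (X (eastLabel n (m + 1))) * PowerSeries.X) =
      pathSeries n m := by
  rw [pathSeries, pathSeries, ← pow_one PowerSeries.X]
  refine PowerSeries.mk_mul_one_sub_C_mul_X_pow (fun r hr => ?_) fun r => ?_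
  · obtain rfl : r = 0 := by omega
    simp only [add_zero, pathSum_diag]
  · rw [← add_assoc, pathSum_succ_succ_of_ne hm, mul_comm, add_right_comm]
    rfl

lemma pathSeries_zero_mul (hn : n ≠ 0) :
    pathSeries n 0 * (1 - PowerSeries.C (X (eastLabel n 0)) * PowerSeries.X) = 1 := by
  trans PowerSeries.mk fun r => if r = 0 then 1 else 0
  · rw [pathSeries, ← pow_one PowerSeries.X]
    refine PowerSeries.mk_mul_one_sub_C_mul_X_pow (fun r hr => ?_) fun r => ?_
    · obtain rfl : r = 0 := by omega
      simp only [add_zero, pathSum_diag]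
    · simp only [zero_add, pathSum_zero_succ hn, mul_comm, if_neg r.succ_ne_zero, add_zero]
  · ext r
    simp [PowerSeries.coeff_one]

lemma pathSeries_self_mul (n : ℕ) :
    pathSeries (n + 1) (n + 1) *
        (1 - PowerSeries.C (X (Sum.inl (n + 1)) * X (Sum.inr (n + 1))) * PowerSeries.X ^ 2) =
      pathSeries (n + 1) n := by
  have hodd (L : ℕ) : pathSum (n + 1) false (n + 1) (L + 1) =
      X (Sum.inr (n + 1)) * pathSum (n + 1) true (n + 1) L := by
    simp only [pathSum_self_succ, pathSum_false_of_lt n.lt_succ_self, add_zero, Bool.not_false,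
      Bool.false_eq_true, if_false]
  rw [pathSeries, pathSeries]
  refine PowerSeries.mk_mul_one_sub_C_mul_X_pow (fun r hr => ?_) fun r => ?_
  · interval_cases r
    · simp only [add_zero, pathSum_diag]
    · rw [pathSum_self_succ, pathSum_diag, Bool.not_true, if_neg Bool.false_ne_true, mul_zero,
        zero_add]
  · rw [show n + 1 + (r + 2) = n + 1 + r + 1 + 1 by omega, pathSum_self_succ, Bool.not_true,
      hodd, show n + (r + 2) = n + 1 + r + 1 by omega, if_pos rfl]
    ring

lemma pathSeries_two_mul_mul_prod {j : ℕ} (hj : j ≤ n) :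
    pathSeries n (2 * n) *
        ∏ k ∈ Finset.range j, (1 - PowerSeries.C (X (Sum.inr (k + 1))) * PowerSeries.X) =
      pathSeries n (2 * n - j) := by
  induction j with
  | zero => rw [Finset.prod_range_zero, mul_one, Nat.sub_zero]
  | succ j ih =>
    have hlabel : eastLabel n (2 * n - j) = Sum.inr (j + 1) := by
      rw [eastLabel, if_neg (by omega)]
      congr 1
      omega
    rw [Finset.prod_range_succ, ← mul_assoc, ih (by omega), ← hlabel,
      show 2 * n - j = 2 * n - (j + 1) + 1 by omega]
    exact pathSeries_succ_mul_of_ne (by omega)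

lemma pathSeries_mul_prod {j : ℕ} (hj : j < n) :
    pathSeries n j *
        ∏ k ∈ Finset.range (j + 1), (1 - PowerSeries.C (X (Sum.inl (k + 1))) * PowerSeries.X) =
      1 := by
  induction j with
  | zero =>
    rw [Finset.prod_range_one]
    simpa only [eastLabel, if_pos hj] using pathSeries_zero_mul hj.ne'
  | succ j ih =>
    have hlabel : eastLabel n (j + 1) = Sum.inl (j + 1 + 1) := by rw [eastLabel, if_pos hj]
    rw [Finset.prod_range_succ, mul_comm (∏ _ ∈ _, _), ← mul_assoc, ← hlabel,
      pathSeries_succ_mul_of_ne (by omega), ih (by omega)]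

end PathSeries

theorem cPath_generating_function (n : ℕ) (hn : 1 ≤ n) :
    (PowerSeries.mk fun r => cPathSum n r) *
      ((∏ k ∈ Finset.range n,
          (1 - PowerSeries.C (R := MvPolynomial (ℕ ⊕ ℕ) ℤ) (X (Sum.inr (k + 1))) *
            PowerSeries.X)) *
        (1 - PowerSeries.C (R := MvPolynomial (ℕ ⊕ ℕ) ℤ)
            (X (Sum.inl n) * X (Sum.inr n)) * PowerSeries.X ^ 2) *
        ∏ k ∈ Finset.range n,
          (1 - PowerSeries.C (R := MvPolynomial (ℕ ⊕ ℕ) ℤ) (X (Sum.inl (k + 1))) *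
            PowerSeries.X)) = 1 := by
  obtain ⟨n, rfl⟩ : ∃ m, n = m + 1 := ⟨n - 1, by omega⟩
  have hseries :
      (PowerSeries.mk fun r => cPathSum (n + 1) r) = pathSeries (n + 1) (2 * (n + 1)) := by
    simp only [pathSeries, cPathSum_eq_pathSum]
  rw [hseries, ← mul_assoc, ← mul_assoc, pathSeries_two_mul_mul_prod le_rfl,
    show 2 * (n + 1) - (n + 1) = n + 1 by omega, pathSeries_self_mul]
  exact pathSeries_mul_prod n.lt_succ_self
end
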